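/- CVaR is subadditive: CVaR_δ(X₁ + X₂) ≤ CVaR_δ(X₁) + CVaR_δ(X₂) for integrable random variables X₁, X₂ and δ ∈ (0,1]. -/

import Mathlib

/-!
Evaluating the objective of `X₁ + X₂` at `s + t` gives at most the sum of the objectives of `X₁`
at `s` and of `X₂` at `t`, because `(a + b)⁺ ≤ a⁺ + b⁺`; taking infima over `s` and `t` yields
subadditivity. For `δ ≤ 1` the objective is bounded below by `E[X]`, so the infimum defining
`CVaR` is a genuine one rather than the junk value `0` of an unbounded `⨅` in `ℝ`.
-/

open MeasureTheory

/-- Conditional Value at Risk: CVaR_δ(X) = inf_t { t + (1/δ) E[max(X - t, 0)] }. -/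
noncomputable def CVaR {Ω : Type*} [MeasureSpace Ω] (δ : ℝ) (X : Ω → ℝ) : ℝ :=
  ⨅ t : ℝ, (t + (1 / δ) * ∫ ω, max (X ω - t) 0)

noncomputable def CVaR.objective {Ω : Type*} [MeasurableSpace Ω] (μ : Measure Ω) (δ : ℝ)
    (X : Ω → ℝ) (t : ℝ) : ℝ :=
  t + (1 / δ) * ∫ ω, max (X ω - t) 0 ∂μ

namespace CVaR

theorem eq_iInf_objective {Ω : Type*} [MeasureSpace Ω] (δ : ℝ) (X : Ω → ℝ) :
    CVaR δ X = ⨅ t, objective volume δ X t :=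
  rfl

variable {Ω : Type*} [MeasurableSpace Ω] {μ : Measure Ω} {δ : ℝ} {X X₁ X₂ : Ω → ℝ}

theorem integrable_max_sub_const_zero [IsFiniteMeasure μ] (hX : Integrable X μ) (t : ℝ) :
    Integrable (fun ω => max (X ω - t) 0) μ :=
  (hX.sub (integrable_const t)).pos_part

theorem objective_add_le [IsFiniteMeasure μ] (hδ : 0 ≤ δ) (hX₁ : Integrable X₁ μ)
    (hX₂ : Integrable X₂ μ) (s t : ℝ) :
    objective μ δ (fun ω => X₁ ω + X₂ ω) (s + t) ≤ objective μ δ X₁ s + objective μ δ X₂ t := by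
  have hpos₁ := integrable_max_sub_const_zero hX₁ s
  have hpos₂ := integrable_max_sub_const_zero hX₂ t
  have hpointwise : ∀ ω, max (X₁ ω + X₂ ω - (s + t)) 0 ≤ max (X₁ ω - s) 0 + max (X₂ ω - t) 0 := by
    intro ω
    simpa [add_sub_add_comm] using
      max_add_add_le_max_add_max (a := X₁ ω - s) (b := X₂ ω - t) (c := 0) (d := 0)
  have hintegral : ∫ ω, max (X₁ ω + X₂ ω - (s + t)) 0 ∂μ ≤
      (∫ ω, max (X₁ ω - s) 0 ∂μ) + ∫ ω, max (X₂ ω - t) 0 ∂μ := by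
    rw [← integral_add hpos₁ hpos₂]
    exact integral_mono (integrable_max_sub_const_zero (hX₁.add hX₂) _) (hpos₁.add hpos₂)
      hpointwise
  have := mul_le_mul_of_nonneg_left hintegral (one_div_nonneg.mpr hδ)
  simp only [objective]
  linarith

theorem integral_le_objective [IsProbabilityMeasure μ] (hδ0 : 0 < δ) (hδ1 : δ ≤ 1)
    (hX : Integrable X μ) (t : ℝ) :
    ∫ ω, X ω ∂μ ≤ objective μ δ X t := by
  have hpos := integrable_max_sub_const_zero hX t
  calc ∫ ω, X ω ∂μ = t + ∫ ω, (X ω - t) ∂μ := by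
        rw [integral_sub hX (integrable_const t)]
        simp
    _ ≤ t + ∫ ω, max (X ω - t) 0 ∂μ :=
        add_le_add_right (integral_mono (hX.sub (integrable_const t)) hpos
          fun ω => le_max_left _ _) t
    _ ≤ t + (1 / δ) * ∫ ω, max (X ω - t) 0 ∂μ := by
        gcongr
        exact le_mul_of_one_le_left (integral_nonneg fun ω => le_max_right _ _)
          (one_le_one_div hδ0 hδ1)

end CVaR

open CVaR in
/-- CVaR is subadditive. -/
theorem CVaR_subadditive {Ω : Type*} [MeasureSpace Ω]
    [IsProbabilityMeasure (volume : Measure Ω)]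
    (X₁ X₂ : Ω → ℝ) (hX₁ : Integrable X₁) (hX₂ : Integrable X₂)
    (δ : ℝ) (hδ0 : 0 < δ) (hδ1 : δ ≤ 1) :
    CVaR δ (fun ω => X₁ ω + X₂ ω) ≤ CVaR δ X₁ + CVaR δ X₂ := by
  have hbdd : BddBelow (Set.range (objective volume δ fun ω => X₁ ω + X₂ ω)) :=
    ⟨_, Set.forall_mem_range.mpr (integral_le_objective hδ0 hδ1 (hX₁.add hX₂))⟩
  simp only [eq_iInf_objective]
  exact le_ciInf_add_ciInf fun s t =>
    (ciInf_le hbdd (s + t)).trans (objective_add_le hδ0.le hX₁ hX₂ s t)
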